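/- arXiv:1307.6440 — 3 statements merged into one kernel-verified Lean document; each statement's English description precedes it below -/
import Mathlib

section
/- For any nonempty subset S of the positive integers, the generating function P0^S(x,y) of crossing-free partitions of points on a circle all of whose blocks have size in S (x marking points, y marking blocks) satisfies P0^S(x,y) = 1 + y · Σ_{s∈S} x^s · P0^S(x,y)^s. -/
/-
Root decomposition. In a crossing-free partition of `n ≥ 1` points, let `B` be the block of the
point `0` and `s ∈ S` its size. Crossing-freeness forces every other block into one of the `s`
gaps that the points of `B` cut out of the circle (the last gap running up to `n`), and the blocks
inside each gap form a crossing-free partition of it; conversely, placing arbitrary crossing-free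
partitions into the gaps of a block of size `s` never creates a crossing. Hence a partition of
`n` points into `m` blocks is the same as a size `s ∈ S` together with `s` crossing-free
partitions whose numbers of points add up to `n - s` and numbers of blocks to `m - 1`, which is the
coefficient of `x^n y^m` in `y x^s P^s`.
-/

/-- Two chords `(p.1, p.2)` and `(q.1, q.2)` of a circle with vertices labeled
`0, 1, …, n-1` in circular order interleave, i.e. cross, when
`p.1 < q.1 < p.2 < q.2`. -/
def Interleaves {n : ℕ} (p q : Fin n × Fin n) : Prop :=
  p.1 < q.1 ∧ q.1 < p.2 ∧ p.2 < q.2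

instance {n : ℕ} (p q : Fin n × Fin n) : Decidable (Interleaves p q) :=
  inferInstanceAs (Decidable (_ ∧ _ ∧ _))

/-- The number of crossings of a set of chords (each chord recorded with its
endpoints in increasing order): the number of unordered pairs of chords whose
endpoints interleave around the circle. -/
def crossNum {n : ℕ} (D : Finset (Fin n × Fin n)) : ℕ :=
  ((D ×ˢ D).filter fun pq => Interleaves pq.1 pq.2).card

/-- `a` and `b` lie in the same block of the partition `P`. -/
def SameBlock {n : ℕ} (P : Finpartition (Finset.univ : Finset (Fin n))) (a b : Fin n) : Prop :=
  ∃ B ∈ P.parts, a ∈ B ∧ b ∈ B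

/-- The number of crossings (counted with multiplicity) of a partition of `n`
points on a circle: the number of unordered pairs of interleaving chords whose
endpoints lie two in one block and two in a different block. -/
noncomputable def crossNumPart {n : ℕ}
    (P : Finpartition (Finset.univ : Finset (Fin n))) : ℕ :=
  Nat.card {q : (Fin n × Fin n) × (Fin n × Fin n) //
    Interleaves q.1 q.2 ∧ SameBlock P q.1.1 q.1.2 ∧ SameBlock P q.2.1 q.2.2 ∧
    ¬ SameBlock P q.1.1 q.2.1}

open MvPowerSeries

/-- The generating function `P₀^S(x,y)` of crossing-free partitions of points
on a circle all of whose blocks have size in `S`, where `x` (variable `0`)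
marks points and `y` (variable `1`) marks blocks. -/
noncomputable def partGF0S (S : Set ℕ) : MvPowerSeries (Fin 2) ℚ :=
  fun e => (Nat.card {P : Finpartition (Finset.univ : Finset (Fin (e 0))) //
    (∀ B ∈ P.parts, B.card ∈ S) ∧ crossNumPart P = 0 ∧ P.parts.card = e 1} : ℚ)

namespace Noncrossing

open Finset

section Basic

variable {n : ℕ}

def IsNoncrossing (P : Finpartition (univ : Finset (Fin n))) : Prop :=
  ∀ p q : Fin n × Fin n, Interleaves p q → SameBlock P p.1 p.2 → SameBlock P q.1 q.2 →
    SameBlock P p.1 q.1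

theorem crossNumPart_eq_zero_iff (P : Finpartition (univ : Finset (Fin n))) :
    crossNumPart P = 0 ↔ IsNoncrossing P := by
  simp only [crossNumPart, Nat.card_eq_zero, isEmpty_subtype, not_infinite_iff_finite.2
    inferInstance, or_false, not_and, not_not, IsNoncrossing, Prod.forall]

abbrev NCPartition (S : Set ℕ) (n m : ℕ) : Type :=
  {P : Finpartition (univ : Finset (Fin n)) //
    (∀ B ∈ P.parts, B.card ∈ S) ∧ crossNumPart P = 0 ∧ P.parts.card = m}

theorem coeff_partGF0S (S : Set ℕ) (e : Fin 2 →₀ ℕ) :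
    MvPowerSeries.coeff e (partGF0S S) = Nat.card (NCPartition S (e 0) (e 1)) := rfl

theorem card_ncPartition_zero_points (S : Set ℕ) (m : ℕ) :
    Nat.card (NCPartition S 0 m) = if m = 0 then 1 else 0 := by
  have hparts (P : Finpartition (univ : Finset (Fin 0))) : P.parts = ∅ :=
    Finpartition.parts_eq_empty_iff.2 univ_eq_empty
  split_ifs with hm
  · subst hm
    refine Nat.card_eq_one_iff_unique.2 ⟨⟨fun P Q => Subtype.ext ?_⟩, ⟨⊥, ?_⟩⟩
    · exact Finpartition.ext (by rw [hparts, hparts])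
    · refine ⟨by simp [hparts], (crossNumPart_eq_zero_iff _).2 fun p => p.1.elim0, ?_⟩
      simp [hparts]
  · exact Nat.card_eq_zero.2 (.inl ⟨fun P => hm (by simpa [hparts] using P.2.2.2.symm)⟩)

theorem card_ncPartition_zero_blocks (S : Set ℕ) (hn : 0 < n) :
    Nat.card (NCPartition S n 0) = 0 := by
  refine Nat.card_eq_zero.2 (.inl ⟨fun P => ?_⟩)
  have h := P.2.2.2
  rw [card_eq_zero, Finpartition.parts_eq_empty_iff] at h
  have h0 : (⟨0, hn⟩ : Fin n) ∈ (⊥ : Finset (Fin n)) := h ▸ mem_univ _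
  simp at h0

end Basic

section Cuts

variable {s : ℕ} (sz : Fin s → ℕ)

def gapLen (j : ℕ) : ℕ := if h : j < s then sz ⟨j, h⟩ else 0

/-- Layout of a glued partition: the root block consists of the points `cut sz i` for `i < s`,
starting with `cut sz 0 = 0`, and gap `i` is the open interval from `cut sz i` to
`cut sz (i + 1)`, holding `sz i` points; `cut sz s = n` closes the last gap. -/
def cut (j : ℕ) : ℕ := j + ∑ i ∈ range j, gapLen sz i

def InGap (i x : ℕ) : Prop := cut sz i < x ∧ x < cut sz (i + 1)

instance (i x : ℕ) : Decidable (InGap sz i x) := inferInstanceAs (Decidable (_ ∧ _))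

theorem gapLen_coe (i : Fin s) : gapLen sz i = sz i := by rw [gapLen, dif_pos i.isLt]

theorem cut_zero : cut sz 0 = 0 := by simp [cut]

theorem cut_succ (i : ℕ) : cut sz (i + 1) = cut sz i + gapLen sz i + 1 := by
  rw [cut, cut, sum_range_succ]; ring

theorem cut_strictMono : StrictMono (cut sz) :=
  strictMono_nat_of_lt_succ fun i => by rw [cut_succ]; omega

theorem cut_ne_of_inGap {i x : ℕ} (hx : InGap sz i x) (j : ℕ) : cut sz j ≠ x := by
  rintro rfl
  have := (cut_strictMono sz).lt_iff_lt.1 hx.1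
  have := (cut_strictMono sz).lt_iff_lt.1 hx.2
  omega

theorem InGap.unique {i j x : ℕ} (hi : InGap sz i x) (hj : InGap sz j x) : i = j := by
  have := (cut_strictMono sz).lt_iff_lt.1 (hi.1.trans hj.2)
  have := (cut_strictMono sz).lt_iff_lt.1 (hj.1.trans hi.2)
  omega

variable {n : ℕ} (hn : ∑ i, sz i + s = n)
include hn

theorem cut_self : cut sz s = n := by
  rw [cut, ← Fin.sum_univ_eq_sum_range, ← hn]
  simp only [gapLen_coe]
  ring

theorem cut_lt {i : ℕ} (hi : i < s) : cut sz i < n :=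
  cut_self sz hn ▸ cut_strictMono sz hi

theorem cut_add_lt {i : ℕ} (hi : i < s) {k : ℕ} (hk : k < gapLen sz i) :
    cut sz i + 1 + k < n := by
  have := cut_succ sz i
  have := (cut_strictMono sz).monotone (show i + 1 ≤ s by omega)
  rw [cut_self sz hn] at this
  omega

theorem exists_cut_eq_or_inGap {x : ℕ} (hx : x < n) :
    (∃ i < s, cut sz i = x) ∨ ∃ i < s, InGap sz i x := by
  have hex : ∃ j, x < cut sz j := ⟨s, cut_self sz hn ▸ hx⟩
  obtain ⟨i, hi⟩ : ∃ i, Nat.find hex = i + 1 := by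
    refine Nat.exists_eq_add_one.2 (Nat.pos_of_ne_zero fun h => ?_)
    simpa [h, cut_zero] using Nat.find_spec hex
  have hlt : x < cut sz (i + 1) := hi ▸ Nat.find_spec hex
  have hle : cut sz i ≤ x := not_lt.1 (Nat.find_min hex (by omega))
  have his : i < s := by
    by_contra h
    have := (cut_strictMono sz).monotone (not_lt.1 h)
    rw [cut_self sz hn] at this
    omega
  rcases hle.eq_or_lt with h | h
  · exact .inl ⟨i, his, h⟩
  · exact .inr ⟨i, his, h, hlt⟩

def cutPoint (i : Fin s) : Fin n := ⟨cut sz i, cut_lt sz hn i.isLt⟩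

def rootBlock : Finset (Fin n) := univ.image (cutPoint sz hn)

def gapPoint (i : Fin s) (k : Fin (sz i)) : Fin n :=
  ⟨cut sz i + 1 + k, cut_add_lt sz hn i.isLt (by rw [gapLen_coe]; exact k.isLt)⟩

def gapBlock (i : Fin s) (q : Finset (Fin (sz i))) : Finset (Fin n) := q.image (gapPoint sz hn i)

theorem cutPoint_strictMono : StrictMono (cutPoint sz hn) :=
  fun _ _ hij => (cut_strictMono sz).lt_iff_lt.2 hij

theorem card_rootBlock : (rootBlock sz hn).card = s := by
  rw [rootBlock, card_image_of_injective _ (cutPoint_strictMono sz hn).injective, card_univ,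
    Fintype.card_fin]

theorem eq_of_rootBlock_eq {sz' : Fin s → ℕ} (hn' : ∑ i, sz' i + s = n)
    (h : rootBlock sz hn = rootBlock sz' hn') : sz = sz' := by
  have hpt : cutPoint sz hn = cutPoint sz' hn' :=
    (orderEmbOfFin_unique (card_rootBlock sz' hn') (fun i => h ▸ mem_image_of_mem _ (mem_univ i))
      (cutPoint_strictMono sz hn)).trans
    (orderEmbOfFin_unique (card_rootBlock sz' hn') (fun i => mem_image_of_mem _ (mem_univ i))
      (cutPoint_strictMono sz' hn')).symm
  have hcut (j : ℕ) (hj : j ≤ s) : cut sz j = cut sz' j := by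
    rcases hj.lt_or_eq with hj | rfl
    · exact congrArg Fin.val (congrFun hpt ⟨j, hj⟩)
    · rw [cut_self sz hn, cut_self sz' hn']
  funext i
  have := hcut i i.isLt.le
  have := hcut (i + 1) i.isLt
  have := cut_succ sz i
  have := cut_succ sz' i
  rw [gapLen_coe] at *
  omega

theorem mem_rootBlock {x : Fin n} : x ∈ rootBlock sz hn ↔ ∃ i : Fin s, cut sz i = x := by
  simp [rootBlock, cutPoint, Fin.ext_iff]

theorem notMem_rootBlock_of_inGap {x : Fin n} {i : ℕ} (hx : InGap sz i x) :
    x ∉ rootBlock sz hn := fun h => by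
  obtain ⟨j, hj⟩ := (mem_rootBlock sz hn).1 h
  exact cut_ne_of_inGap sz hx j hj

theorem gapPoint_strictMono (i : Fin s) : StrictMono (gapPoint sz hn i) :=
  fun k l hkl => by simp only [gapPoint, Fin.mk_lt_mk]; omega

theorem inGap_gapPoint (i : Fin s) (k : Fin (sz i)) : InGap sz i (gapPoint sz hn i k) := by
  have := cut_succ sz i
  have := gapLen_coe sz i
  simp only [InGap, gapPoint]
  omega

theorem exists_gapPoint_eq {i : Fin s} {x : Fin n} (hx : InGap sz i x) :
    ∃ k, gapPoint sz hn i k = x := by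
  have := cut_succ sz i
  have := gapLen_coe sz i
  obtain ⟨h1, h2⟩ := hx
  refine ⟨⟨x - cut sz i - 1, by omega⟩, Fin.ext ?_⟩
  simp only [gapPoint]
  omega

theorem inGap_of_mem_gapBlock {i : Fin s} {q : Finset (Fin (sz i))} {x : Fin n}
    (hx : x ∈ gapBlock sz hn i q) : InGap sz i x := by
  obtain ⟨k, -, rfl⟩ := mem_image.1 hx
  exact inGap_gapPoint sz hn i k

theorem mem_rootBlock_or_exists_gapPoint_eq (x : Fin n) :
    x ∈ rootBlock sz hn ∨ ∃ i k, gapPoint sz hn i k = x := by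
  rcases exists_cut_eq_or_inGap sz hn x.isLt with ⟨i, hi, hx⟩ | ⟨i, hi, hx⟩
  · exact .inl ((mem_rootBlock sz hn).2 ⟨⟨i, hi⟩, hx⟩)
  · exact .inr ⟨⟨i, hi⟩, exists_gapPoint_eq sz hn (i := ⟨i, hi⟩) hx⟩

theorem card_gapBlock (i : Fin s) (q : Finset (Fin (sz i))) : (gapBlock sz hn i q).card = q.card :=
  card_image_of_injective _ (gapPoint_strictMono sz hn i).injective

theorem gapBlock_injective (i : Fin s) : Function.Injective (gapBlock sz hn i) :=
  image_injective (gapPoint_strictMono sz hn i).injective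

def gapRestrict (i : Fin s) (X : Finset (Fin n)) : Finset (Fin (sz i)) :=
  univ.filter fun k => gapPoint sz hn i k ∈ X

theorem gapBlock_gapRestrict {i : Fin s} {X : Finset (Fin n)} (hX : ∀ x ∈ X, InGap sz i x) :
    gapBlock sz hn i (gapRestrict sz hn i X) = X := by
  ext x
  simp only [gapBlock, gapRestrict, mem_image, mem_filter, mem_univ, true_and]
  refine ⟨fun ⟨k, hk, hkx⟩ => hkx ▸ hk, fun hx => ?_⟩
  obtain ⟨k, rfl⟩ := exists_gapPoint_eq sz hn (hX x hx)
  exact ⟨k, hx, rfl⟩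

end Cuts

section Glue

variable {s : ℕ} (sz : Fin s → ℕ) {n : ℕ} (hn : ∑ i, sz i + s = n)
  (Q : ∀ i : Fin s, Finpartition (univ : Finset (Fin (sz i))))

def gapParts (P : Finpartition (univ : Finset (Fin n))) (i : ℕ) : Finset (Finset (Fin n)) :=
  P.parts.filter fun X => ∀ x ∈ X, InGap sz i x

def glueParts : Finset (Finset (Fin n)) :=
  insert (rootBlock sz hn) (univ.biUnion fun i => (Q i).parts.image (gapBlock sz hn i))

theorem mem_glueParts {X : Finset (Fin n)} :
    X ∈ glueParts sz hn Q ↔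
      X = rootBlock sz hn ∨ ∃ i, ∃ q ∈ (Q i).parts, gapBlock sz hn i q = X := by
  simp [glueParts]

variable {sz hn Q} in
theorem gapBlock_nonempty {i : Fin s} {q : Finset (Fin (sz i))} (hq : q ∈ (Q i).parts) :
    (gapBlock sz hn i q).Nonempty :=
  ((Q i).nonempty_of_mem_parts hq).image _

theorem disjoint_rootBlock_gapBlock (i : Fin s) (q : Finset (Fin (sz i))) :
    Disjoint (rootBlock sz hn) (gapBlock sz hn i q) :=
  disjoint_right.2 fun _ hx => notMem_rootBlock_of_inGap sz hn (inGap_of_mem_gapBlock sz hn hx)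

theorem gapBlock_ne_rootBlock {i : Fin s} {q : Finset (Fin (sz i))} (hq : q ∈ (Q i).parts) :
    gapBlock sz hn i q ≠ rootBlock sz hn := fun h => by
  obtain ⟨x, hx⟩ := gapBlock_nonempty (hn := hn) hq
  exact notMem_rootBlock_of_inGap sz hn (inGap_of_mem_gapBlock sz hn hx) (h ▸ hx)

theorem disjoint_gapBlock {i j : Fin s} {q : Finset (Fin (sz i))} {q' : Finset (Fin (sz j))}
    (hq : q ∈ (Q i).parts) (hq' : q' ∈ (Q j).parts)
    (h : gapBlock sz hn i q ≠ gapBlock sz hn j q') :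
    Disjoint (gapBlock sz hn i q) (gapBlock sz hn j q') := by
  refine disjoint_left.2 fun x hx hx' => h ?_
  obtain rfl : i = j :=
    Fin.ext ((inGap_of_mem_gapBlock sz hn hx).unique sz (inGap_of_mem_gapBlock sz hn hx'))
  obtain ⟨k, hk, rfl⟩ := mem_image.1 hx
  obtain ⟨k', hk', hkk'⟩ := mem_image.1 hx'
  obtain rfl := (gapPoint_strictMono sz hn i).injective hkk'
  rw [(Q i).eq_of_mem_parts hq hq' hk hk']

def glue (hs : 0 < s) : Finpartition (univ : Finset (Fin n)) where
  parts := glueParts sz hn Q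
  supIndep := by
    refine supIndep_iff_pairwiseDisjoint.2 fun X hX Y hY hXY => ?_
    rcases (mem_glueParts sz hn Q).1 hX with rfl | ⟨i, q, hq, rfl⟩ <;>
      rcases (mem_glueParts sz hn Q).1 hY with rfl | ⟨j, q', hq', rfl⟩
    · exact absurd rfl hXY
    · exact disjoint_rootBlock_gapBlock sz hn j q'
    · exact (disjoint_rootBlock_gapBlock sz hn i q).symm
    · exact disjoint_gapBlock sz hn Q hq hq' hXY
  sup_parts := by
    refine eq_univ_of_forall fun x => mem_sup.2 ?_
    rcases mem_rootBlock_or_exists_gapPoint_eq sz hn x with hx | ⟨i, k, rfl⟩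
    · exact ⟨_, (mem_glueParts sz hn Q).2 (.inl rfl), hx⟩
    · obtain ⟨q, hq, hk⟩ := (Q i).exists_mem (mem_univ k)
      exact ⟨_, (mem_glueParts sz hn Q).2 (.inr ⟨i, q, hq, rfl⟩), mem_image_of_mem _ hk⟩
  bot_notMem h := by
    rcases (mem_glueParts sz hn Q).1 h with h | ⟨i, q, hq, h⟩
    · have h0 : cutPoint sz hn ⟨0, hs⟩ ∈ rootBlock sz hn := mem_image_of_mem _ (mem_univ _)
      exact notMem_empty _ (h ▸ h0)
    · exact (gapBlock_nonempty hq).ne_empty h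

variable (hs : 0 < s)

theorem glue_parts : (glue sz hn Q hs).parts = glueParts sz hn Q := rfl

theorem card_glue_parts : (glue sz hn Q hs).parts.card = ∑ i, (Q i).parts.card + 1 := by
  rw [glue_parts, glueParts, card_insert_of_notMem, card_biUnion]
  · exact congrArg (· + 1) (sum_congr rfl fun i _ =>
      card_image_of_injective _ (gapBlock_injective sz hn i))
  · intro i _ j _ hij
    refine disjoint_left.2 fun X hXi hXj => hij ?_
    obtain ⟨q, hq, rfl⟩ := mem_image.1 hXi
    obtain ⟨x, hx⟩ := gapBlock_nonempty (hn := hn) hq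
    obtain ⟨q', -, hq'⟩ := mem_image.1 hXj
    exact Fin.ext ((inGap_of_mem_gapBlock sz hn hx).unique sz
      (inGap_of_mem_gapBlock sz hn (hq' ▸ hx)))
  · simp only [mem_biUnion, mem_image, not_exists, not_and]
    exact fun i _ q hq => gapBlock_ne_rootBlock sz hn Q hq

theorem isNoncrossing_glue (hQ : ∀ i, IsNoncrossing (Q i)) :
    IsNoncrossing (glue sz hn Q hs) := by
  rintro ⟨p₁, p₂⟩ ⟨q₁, q₂⟩ ⟨h₁, h₂, h₃⟩ ⟨X, hX, hp₁, hp₂⟩ ⟨Y, hY, hq₁, hq₂⟩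
  dsimp only at h₁ h₂ h₃ hp₁ hp₂ hq₁ hq₂ ⊢
  rw [Fin.lt_def] at h₁ h₂ h₃
  rcases (mem_glueParts sz hn Q).1 hX with rfl | ⟨i, q, hq, rfl⟩ <;>
    rcases (mem_glueParts sz hn Q).1 hY with rfl | ⟨j, q', hq', rfl⟩
  · exact ⟨_, hX, hp₁, hq₁⟩
  · obtain ⟨a, ha⟩ := (mem_rootBlock sz hn).1 hp₂
    obtain ⟨_, _⟩ := inGap_of_mem_gapBlock sz hn hq₁
    obtain ⟨_, _⟩ := inGap_of_mem_gapBlock sz hn hq₂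
    exact absurd ha (cut_ne_of_inGap sz (i := j) ⟨by omega, by omega⟩ a)
  · obtain ⟨a, ha⟩ := (mem_rootBlock sz hn).1 hq₁
    obtain ⟨_, _⟩ := inGap_of_mem_gapBlock sz hn hp₁
    obtain ⟨_, _⟩ := inGap_of_mem_gapBlock sz hn hp₂
    exact absurd ha (cut_ne_of_inGap sz (i := i) ⟨by omega, by omega⟩ a)
  · have hp₁' := inGap_of_mem_gapBlock sz hn hp₁
    have hp₂' := inGap_of_mem_gapBlock sz hn hp₂
    obtain rfl : i = j := Fin.ext <| InGap.unique sz (x := q₁)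
      ⟨by have := hp₁'.1; omega, by have := hp₂'.2; omega⟩ (inGap_of_mem_gapBlock sz hn hq₁)
    obtain ⟨k₁, hk₁, rfl⟩ := mem_image.1 hp₁
    obtain ⟨k₂, hk₂, rfl⟩ := mem_image.1 hp₂
    obtain ⟨k₃, hk₃, rfl⟩ := mem_image.1 hq₁
    obtain ⟨k₄, hk₄, rfl⟩ := mem_image.1 hq₂
    have hmono {a b : Fin (sz i)} (h : (gapPoint sz hn i a : ℕ) < gapPoint sz hn i b) : a < b :=
      (gapPoint_strictMono sz hn i).lt_iff_lt.1 h
    obtain ⟨r, hr, hk₁r, hk₃r⟩ := hQ i (k₁, k₂) (k₃, k₄)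
      ⟨hmono h₁, hmono h₂, hmono h₃⟩ ⟨q, hq, hk₁, hk₂⟩ ⟨q', hq', hk₃, hk₄⟩
    exact ⟨_, (mem_glueParts sz hn Q).2 (.inr ⟨i, r, hr, rfl⟩),
      mem_image_of_mem _ hk₁r, mem_image_of_mem _ hk₃r⟩

theorem isNoncrossing_of_isNoncrossing_glue (h : IsNoncrossing (glue sz hn Q hs)) (i : Fin s) :
    IsNoncrossing (Q i) := by
  rintro ⟨k₁, k₂⟩ ⟨k₃, k₄⟩ ⟨h₁, h₂, h₃⟩ ⟨q, hq, hk₁, hk₂⟩ ⟨q', hq', hk₃, hk₄⟩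
  have hmono := gapPoint_strictMono sz hn i
  have hmem {q} (hq : q ∈ (Q i).parts) : gapBlock sz hn i q ∈ (glue sz hn Q hs).parts :=
    (mem_glueParts sz hn Q).2 (.inr ⟨i, q, hq, rfl⟩)
  obtain ⟨X, hX, hX₁, hX₃⟩ := h (gapPoint sz hn i k₁, gapPoint sz hn i k₂)
    (gapPoint sz hn i k₃, gapPoint sz hn i k₄) ⟨hmono h₁, hmono h₂, hmono h₃⟩
    ⟨_, hmem hq, mem_image_of_mem _ hk₁, mem_image_of_mem _ hk₂⟩
    ⟨_, hmem hq', mem_image_of_mem _ hk₃, mem_image_of_mem _ hk₄⟩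
  rcases (mem_glueParts sz hn Q).1 hX with rfl | ⟨j, r, hr, rfl⟩
  · exact absurd hX₁ (notMem_rootBlock_of_inGap sz hn (inGap_gapPoint sz hn i k₁))
  obtain rfl : j = i := Fin.ext <|
    (inGap_of_mem_gapBlock sz hn hX₁).unique sz (inGap_gapPoint sz hn i k₁)
  simp only [gapBlock, (gapPoint_strictMono sz hn j).injective.mem_finset_image] at hX₁ hX₃
  exact ⟨r, hr, hX₁, hX₃⟩

theorem isNoncrossing_glue_iff :
    IsNoncrossing (glue sz hn Q hs) ↔ ∀ i, IsNoncrossing (Q i) :=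
  ⟨isNoncrossing_of_isNoncrossing_glue sz hn Q hs, isNoncrossing_glue sz hn Q hs⟩

theorem rootBlock_mem_glue_parts : rootBlock sz hn ∈ (glue sz hn Q hs).parts :=
  (mem_glueParts sz hn Q).2 (.inl rfl)

theorem gapBlock_mem_glue_parts {i : Fin s} {q : Finset (Fin (sz i))} (hq : q ∈ (Q i).parts) :
    gapBlock sz hn i q ∈ (glue sz hn Q hs).parts :=
  (mem_glueParts sz hn Q).2 (.inr ⟨i, q, hq, rfl⟩)

theorem glue_part_zero [NeZero n] : (glue sz hn Q hs).part 0 = rootBlock sz hn :=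
  (glue sz hn Q hs).part_eq_of_mem (rootBlock_mem_glue_parts sz hn Q hs)
    ((mem_rootBlock sz hn).2 ⟨⟨0, hs⟩, cut_zero sz⟩)

theorem gapParts_glue (i : Fin s) :
    gapParts sz (glue sz hn Q hs) i = (Q i).parts.image (gapBlock sz hn i) := by
  ext X
  simp only [gapParts, mem_filter, mem_image]
  constructor
  · rintro ⟨hX, hXi⟩
    rcases (mem_glueParts sz hn Q).1 hX with rfl | ⟨j, q, hq, rfl⟩
    · exact (cut_ne_of_inGap sz (hXi (cutPoint sz hn ⟨0, hs⟩) (mem_image_of_mem _ (mem_univ _))) 0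
        rfl).elim
    · obtain ⟨x, hx⟩ := gapBlock_nonempty (hn := hn) hq
      obtain rfl : j = i := Fin.ext ((inGap_of_mem_gapBlock sz hn hx).unique sz (hXi x hx))
      exact ⟨q, hq, rfl⟩
  · rintro ⟨q, hq, rfl⟩
    exact ⟨gapBlock_mem_glue_parts sz hn Q hs hq, fun x hx => inGap_of_mem_gapBlock sz hn hx⟩

theorem glue_injective : Function.Injective (glue sz hn · hs) := fun Q Q' h =>
  funext fun i => Finpartition.ext <| image_injective (gapBlock_injective sz hn i) <| by
    rw [← gapParts_glue sz hn Q hs, ← gapParts_glue sz hn Q' hs]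
    exact congrArg (gapParts sz · i) h

end Glue

section Split

variable {n : ℕ} [NeZero n] (P : Finpartition (univ : Finset (Fin n)))

def rootPos (j : ℕ) : ℕ :=
  if h : j < (P.part 0).card then (P.part 0).orderEmbOfFin rfl ⟨j, h⟩ else n

def splitSizes (i : Fin (P.part 0).card) : ℕ := rootPos P (i + 1) - rootPos P i - 1

theorem card_part_zero_pos : 0 < (P.part 0).card := card_pos.2 ⟨0, P.mem_part (mem_univ 0)⟩

theorem rootPos_zero : rootPos P 0 = 0 := by
  rw [rootPos, dif_pos (card_part_zero_pos P), orderEmbOfFin_zero]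
  simpa using min'_le (P.part 0) 0 (P.mem_part (mem_univ 0))

theorem rootPos_lt_succ {j : ℕ} (hj : j < (P.part 0).card) : rootPos P j < rootPos P (j + 1) := by
  rw [rootPos, dif_pos hj, rootPos]
  split_ifs with h
  · exact ((P.part 0).orderEmbOfFin rfl).strictMono (Fin.mk_lt_mk.2 (lt_add_one j))
  · exact Fin.isLt _

theorem cut_splitSizes {j : ℕ} (hj : j ≤ (P.part 0).card) :
    cut (splitSizes P) j = rootPos P j := by
  induction j with
  | zero => rw [cut_zero, rootPos_zero]
  | succ j ih =>
    have := rootPos_lt_succ P (j := j) (by omega)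
    rw [cut_succ, ih (by omega), gapLen, dif_pos (by omega), splitSizes]
    dsimp only
    omega

theorem sum_splitSizes_add_card : ∑ i, splitSizes P i + (P.part 0).card = n := by
  have h := cut_splitSizes P le_rfl
  rw [rootPos, dif_neg (lt_irrefl _), cut, ← Fin.sum_univ_eq_sum_range] at h
  simp only [gapLen_coe] at h
  omega

theorem rootBlock_splitSizes :
    rootBlock (splitSizes P) (sum_splitSizes_add_card P) = P.part 0 := by
  have : cutPoint (splitSizes P) (sum_splitSizes_add_card P) = (P.part 0).orderEmbOfFin rfl :=
    funext fun i => Fin.ext <| by simp [cutPoint, cut_splitSizes P i.isLt.le, rootPos]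
  rw [rootBlock, this, image_orderEmbOfFin_univ]

theorem exists_inGap_of_notMem {x : Fin n} (hx : x ∉ P.part 0) :
    ∃ i : Fin (P.part 0).card, InGap (splitSizes P) i x := by
  rcases mem_rootBlock_or_exists_gapPoint_eq _ (sum_splitSizes_add_card P) x with h | ⟨i, k, rfl⟩
  · exact absurd (rootBlock_splitSizes P ▸ h) hx
  · exact ⟨i, inGap_gapPoint _ _ i k⟩

theorem notMem_part_zero_of_inGap {i : ℕ} {x : Fin n} (hx : InGap (splitSizes P) i x) :
    x ∉ P.part 0 :=
  rootBlock_splitSizes P ▸ notMem_rootBlock_of_inGap _ (sum_splitSizes_add_card P) hx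

variable {P}

theorem gap_eq_of_sameBlock (hP : IsNoncrossing P) {x y : Fin n} (hxy : SameBlock P x y)
    {i j : Fin (P.part 0).card} (hx : InGap (splitSizes P) i x)
    (hy : InGap (splitSizes P) j y) : i = j := by
  have hroot := P.part_mem.2 (mem_univ 0)
  -- if `i < j`, the chord `x y` crosses the chord from `0` to the point `cut (i + 1)` of `P.part 0`
  have hsep {x y : Fin n} {i j : Fin (P.part 0).card} (hxy : SameBlock P x y)
      (hx : InGap (splitSizes P) i x) (hy : InGap (splitSizes P) j y) : ¬ i < j := fun hij => by
    have hi : (i : ℕ) + 1 < (P.part 0).card := by omega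
    have hp : cutPoint (splitSizes P) (sum_splitSizes_add_card P) ⟨i + 1, hi⟩ ∈ P.part 0 :=
      (rootBlock_splitSizes P).subset (mem_image_of_mem _ (mem_univ _))
    have hij' := (cut_strictMono (splitSizes P)).monotone (show (i : ℕ) + 1 ≤ j from hij)
    obtain ⟨B, hB, h0, hxB⟩ := hP (0, _) (x, y)
      ⟨Fin.lt_def.2 (by simp only [Fin.val_zero]; exact (Nat.zero_le _).trans_lt hx.1),
        Fin.lt_def.2 hx.2, Fin.lt_def.2 (hij'.trans_lt hy.1)⟩
      ⟨_, hroot, P.mem_part (mem_univ 0), hp⟩ hxy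
    exact notMem_part_zero_of_inGap P hx (P.part_eq_of_mem hB h0 ▸ hxB)
  obtain ⟨B, hB, hxB, hyB⟩ := hxy
  rcases lt_trichotomy i j with h | h | h
  · exact absurd h (hsep ⟨B, hB, hxB, hyB⟩ hx hy)
  · exact h
  · exact absurd h (hsep ⟨B, hB, hyB, hxB⟩ hy hx)

theorem exists_forall_inGap (hP : IsNoncrossing P) {C : Finset (Fin n)} (hC : C ∈ P.parts)
    (hC0 : C ≠ P.part 0) : ∃ i : Fin (P.part 0).card, ∀ x ∈ C, InGap (splitSizes P) i x := by
  have hnot {x} (hx : x ∈ C) : x ∉ P.part 0 := fun h0 =>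
    hC0 (P.eq_of_mem_parts hC (P.part_mem.2 (mem_univ 0)) hx h0)
  obtain ⟨x₀, hx₀⟩ := P.nonempty_of_mem_parts hC
  obtain ⟨i, hi⟩ := exists_inGap_of_notMem P (hnot hx₀)
  refine ⟨i, fun x hx => ?_⟩
  obtain ⟨j, hj⟩ := exists_inGap_of_notMem P (hnot hx)
  have hsame : SameBlock P x₀ x := ⟨C, hC, hx₀, hx⟩
  rwa [gap_eq_of_sameBlock hP hsame hi hj]

theorem parts_eq_insert_biUnion_gapParts (hP : IsNoncrossing P) :
    P.parts = insert (P.part 0)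
      (univ.biUnion fun i : Fin (P.part 0).card => gapParts (splitSizes P) P i) := by
  ext X
  simp only [mem_insert, mem_biUnion, mem_univ, true_and, gapParts, mem_filter]
  constructor
  · intro hX
    by_cases h0 : X = P.part 0
    · exact .inl h0
    · obtain ⟨i, hi⟩ := exists_forall_inGap hP hX h0
      exact .inr ⟨i, hX, hi⟩
  · rintro (rfl | ⟨i, hX, -⟩)
    · exact P.part_mem.2 (mem_univ 0)
    · exact hX

def splitPartition (hP : IsNoncrossing P) (i : Fin (P.part 0).card) :
    Finpartition (univ : Finset (Fin (splitSizes P i))) where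
  parts := (gapParts (splitSizes P) P i).image
    (gapRestrict (splitSizes P) (sum_splitSizes_add_card P) i)
  supIndep := by
    refine supIndep_iff_pairwiseDisjoint.2 fun q hq q' hq' hqq' => ?_
    obtain ⟨X, hX, rfl⟩ := mem_image.1 hq
    obtain ⟨X', hX', rfl⟩ := mem_image.1 hq'
    refine disjoint_filter.2 fun k _ hk hk' => ?_
    have hXX' : X ≠ X' := fun h => hqq' (h ▸ rfl)
    exact disjoint_left.1 (P.disjoint (mem_filter.1 hX).1 (mem_filter.1 hX').1 hXX') hk hk'
  sup_parts := by
    refine eq_univ_of_forall fun k => mem_sup.2 ?_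
    have hxi := inGap_gapPoint (splitSizes P) (sum_splitSizes_add_card P) i k
    have hx := P.mem_part (mem_univ (gapPoint (splitSizes P) (sum_splitSizes_add_card P) i k))
    have hX := P.part_mem.2 (mem_univ (gapPoint (splitSizes P) (sum_splitSizes_add_card P) i k))
    obtain ⟨j, hj⟩ := exists_forall_inGap hP hX fun h =>
      notMem_part_zero_of_inGap P hxi (h.subset hx)
    obtain rfl : j = i := Fin.ext ((hj _ hx).unique _ hxi)
    exact ⟨_, mem_image_of_mem (gapRestrict _ _ j) (mem_filter.2 ⟨hX, hj⟩),
      mem_filter.2 ⟨mem_univ k, hx⟩⟩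
  bot_notMem h := by
    obtain ⟨X, hX, hX0⟩ := mem_image.1 h
    have := gapBlock_gapRestrict _ (sum_splitSizes_add_card P) (mem_filter.1 hX).2
    rw [hX0] at this
    exact P.ne_empty (mem_filter.1 hX).1 (this.symm.trans (image_empty _))

theorem glue_splitPartition (hP : IsNoncrossing P) :
    glue (splitSizes P) (sum_splitSizes_add_card P) (splitPartition hP)
      (card_part_zero_pos P) = P := by
  refine Finpartition.ext ?_
  rw [glue_parts, glueParts, rootBlock_splitSizes, parts_eq_insert_biUnion_gapParts hP]
  refine congrArg _ (biUnion_congr rfl fun i _ => ?_)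
  rw [splitPartition, image_image, image_congr, image_id]
  intro X hX
  exact gapBlock_gapRestrict _ _ (mem_filter.1 hX).2

end Split

section Count

variable (S : Set ℕ) [DecidablePred (· ∈ S)]

/-- A crossing-free partition of `e 0 ≥ 1` points into `e 1 ≥ 1` blocks, decomposed into the
size `s ∈ S` of the block of `0` and the crossing-free partitions of its `s` gaps; gap `i` has
`l i 0` points and `l i 1` blocks. -/
abbrev RootDecomposition (e : Fin 2 →₀ ℕ) : Type :=
  Σ s : {s // s ∈ (range (e 0 + 1)).filter (· ∈ S)},
    Σ l : {l : Fin s.1 →₀ (Fin 2 →₀ ℕ) //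
      l ∈ finsuppAntidiag univ (e - (Finsupp.single 0 s.1 + Finsupp.single 1 1))},
      ∀ i, NCPartition S (l.1 i 0) (l.1 i 1)

theorem card_rootDecomposition (e : Fin 2 →₀ ℕ) :
    Nat.card (RootDecomposition S e) =
      ∑ s ∈ (range (e 0 + 1)).filter (· ∈ S),
        ∑ l ∈ (finsuppAntidiag univ (e - (Finsupp.single 0 s + Finsupp.single 1 1)) :
            Finset (Fin s →₀ Fin 2 →₀ ℕ)),
          ∏ i, Nat.card (NCPartition S (l i 0) (l i 1)) := by
  simp only [Nat.card_sigma, Nat.card_pi]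
  rw [← sum_coe_sort ((range (e 0 + 1)).filter (· ∈ S))]
  refine Fintype.sum_congr _ _ fun s => ?_
  rw [← sum_coe_sort (finsuppAntidiag (univ : Finset (Fin s.1))
    (e - (Finsupp.single 0 s.1 + Finsupp.single 1 1)))]

theorem sum_apply_of_mem_finsuppAntidiag {ι σ : Type*} [DecidableEq ι] [DecidableEq σ]
    {t : Finset ι} {d : σ →₀ ℕ} {l : ι →₀ σ →₀ ℕ} (hl : l ∈ finsuppAntidiag t d) (j : σ) :
    ∑ i ∈ t, l i j = d j := by
  rw [← (mem_finsuppAntidiag.1 hl).1, Finsupp.finsetSum_apply]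

variable {S} {e : Fin 2 →₀ ℕ}

namespace RootDecomposition

theorem sum_sizes_add (D : RootDecomposition S e) : ∑ i, D.2.1.1 i 0 + D.1.1 = e 0 := by
  have h := sum_apply_of_mem_finsuppAntidiag D.2.1.2 0
  have hs := mem_range.1 (mem_filter.1 D.1.2).1
  simp only [Finsupp.tsub_apply, Finsupp.add_apply, Finsupp.single_eq_same,
    Finsupp.single_apply, Fin.one_eq_zero_iff, OfNat.ofNat_ne_one, if_false, add_zero] at h
  omega

theorem sum_blocks_add (D : RootDecomposition S e) (he : 0 < e 1) :
    ∑ i, D.2.1.1 i 1 + 1 = e 1 := by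
  have h := sum_apply_of_mem_finsuppAntidiag D.2.1.2 1
  simp only [Finsupp.tsub_apply, Finsupp.add_apply, Finsupp.single_eq_same,
    Finsupp.single_apply, zero_ne_one, if_false, zero_add] at h
  omega

noncomputable def toNCPartition (hS : ∀ s ∈ S, 0 < s) (he : 0 < e 1) (D : RootDecomposition S e) :
    NCPartition S (e 0) (e 1) :=
  ⟨glue (fun i => D.2.1.1 i 0) D.sum_sizes_add (fun i => (D.2.2 i).1)
      (hS _ (mem_filter.1 D.1.2).2), by
    intro B hB
    rcases (mem_glueParts _ _ _).1 hB with rfl | ⟨i, q, hq, rfl⟩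
    · rw [card_rootBlock]
      exact (mem_filter.1 D.1.2).2
    · rw [card_gapBlock]
      exact (D.2.2 i).2.1 q hq, by
    rw [crossNumPart_eq_zero_iff, isNoncrossing_glue_iff]
    exact fun i => (crossNumPart_eq_zero_iff _).1 (D.2.2 i).2.2.1, by
    rw [card_glue_parts]
    simp only [(D.2.2 _).2.2.2]
    exact D.sum_blocks_add he⟩

theorem toNCPartition_injective (hS : ∀ s ∈ S, 0 < s) (he : 0 < e 1) :
    Function.Injective (toNCPartition hS he) := by
  rintro ⟨⟨s, hs⟩, ⟨l, hl⟩, Q⟩ ⟨⟨s', hs'⟩, ⟨l', hl'⟩, Q'⟩ h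
  have hn := sum_sizes_add ⟨⟨s, hs⟩, ⟨l, hl⟩, Q⟩
  have hn' := sum_sizes_add ⟨⟨s', hs'⟩, ⟨l', hl'⟩, Q'⟩
  have hs₀ := hS s (mem_filter.1 hs).2
  have hs₀' := hS s' (mem_filter.1 hs').2
  dsimp only at hn hn'
  have hP : glue _ hn (fun i => (Q i).1) hs₀ =
      glue _ hn' (fun i => (Q' i).1) hs₀' := congrArg Subtype.val h
  have : NeZero (e 0) := ⟨by omega⟩
  have hroot := congrArg (Finpartition.part · 0) hP
  simp only [glue_part_zero] at hroot
  obtain rfl : s = s' := by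
    have := congrArg Finset.card hroot
    rwa [card_rootBlock, card_rootBlock] at this
  have hsz := eq_of_rootBlock_eq _ _ _ hroot
  have hblocks (i : Fin s) : l i 1 = l' i 1 := by
    rw [← (Q i).2.2.2, ← (Q' i).2.2.2,
      ← card_image_of_injective _ (gapBlock_injective _ hn i),
      ← card_image_of_injective _ (gapBlock_injective _ hn' i),
      ← gapParts_glue _ hn (fun i => (Q i).1) hs₀, ← gapParts_glue _ hn' (fun i => (Q' i).1) hs₀',
      hP, hsz]
  obtain rfl : l = l' :=
    Finsupp.ext fun i => Finsupp.ext (Fin.forall_fin_two.2 ⟨congrFun hsz i, hblocks i⟩)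
  obtain rfl : Q = Q' :=
    funext fun i => Subtype.ext (congrFun (glue_injective _ _ _ hP) i)
  rfl

theorem toNCPartition_surjective (hS : ∀ s ∈ S, 0 < s) (he₀ : 0 < e 0) (he : 0 < e 1) :
    Function.Surjective (toNCPartition hS he) := by
  rintro ⟨P, hsizes, hcross, hcard⟩
  have : NeZero (e 0) := ⟨he₀.ne'⟩
  have hP := (crossNumPart_eq_zero_iff P).1 hcross
  have hglue := glue_splitPartition hP
  have hs : (P.part 0).card ∈ (range (e 0 + 1)).filter (· ∈ S) :=
    mem_filter.2 ⟨mem_range.2 (Nat.lt_succ_of_le ((card_le_univ _).trans_eq (Fintype.card_fin _))),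
      hsizes _ (P.part_mem.2 (mem_univ 0))⟩
  let l : Fin (P.part 0).card →₀ Fin 2 →₀ ℕ := Finsupp.equivFunOnFinite.symm fun i =>
    Finsupp.equivFunOnFinite.symm ![splitSizes P i, (splitPartition hP i).parts.card]
  have hl : l ∈ finsuppAntidiag univ
      (e - (Finsupp.single 0 (P.part 0).card + Finsupp.single 1 1)) := by
    refine mem_finsuppAntidiag.2 ⟨Finsupp.ext (Fin.forall_fin_two.2 ⟨?_, ?_⟩), subset_univ _⟩
    · have := sum_splitSizes_add_card P
      simp [Finsupp.finsetSum_apply, l]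
      omega
    · have := card_glue_parts _ (sum_splitSizes_add_card P) (splitPartition hP)
        (card_part_zero_pos P)
      rw [hglue, hcard] at this
      simp [Finsupp.finsetSum_apply, l]
      omega
  refine ⟨⟨⟨_, hs⟩, ⟨l, hl⟩, fun i => ⟨splitPartition hP i, fun q hq => ?_, ?_, rfl⟩⟩,
    Subtype.ext hglue⟩
  · have hmem := gapBlock_mem_glue_parts (splitSizes P) (sum_splitSizes_add_card P)
      (splitPartition hP) (card_part_zero_pos P) hq
    rw [hglue] at hmem
    exact card_gapBlock (splitSizes P) (sum_splitSizes_add_card P) i q ▸ hsizes _ hmem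
  · exact (crossNumPart_eq_zero_iff _).2
      (isNoncrossing_of_isNoncrossing_glue _ _ _ _ (hglue ▸ hP) i)

end RootDecomposition

theorem card_ncPartition_eq_sum (hS : ∀ s ∈ S, 0 < s) (he₀ : 0 < e 0) (he : 0 < e 1) :
    Nat.card (NCPartition S (e 0) (e 1)) =
      ∑ s ∈ (range (e 0 + 1)).filter (· ∈ S),
        ∑ l ∈ (finsuppAntidiag univ (e - (Finsupp.single 0 s + Finsupp.single 1 1)) :
            Finset (Fin s →₀ Fin 2 →₀ ℕ)),
          ∏ i, Nat.card (NCPartition S (l i 0) (l i 1)) := by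
  rw [← card_rootDecomposition, Nat.card_eq_of_bijective _
    ⟨RootDecomposition.toNCPartition_injective hS he,
      RootDecomposition.toNCPartition_surjective hS he₀ he⟩]

end Count

section PowerSeries

variable {σ R : Type*} [CommSemiring R]

theorem coeff_monomial_one_mul_pow [DecidableEq σ] (e a : σ →₀ ℕ) (f : MvPowerSeries σ R)
    (s : ℕ) :
    coeff e (monomial a 1 * f ^ s) =
      if a ≤ e then ∑ l ∈ finsuppAntidiag (univ : Finset (Fin s)) (e - a), ∏ i, coeff (l i) f
      else 0 := by
  rw [coeff_monomial_mul, one_mul, ← Fin.prod_const, coeff_prod]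

theorem X_mul_X_pow_eq_monomial (j k : σ) (s : ℕ) :
    (X j * X k ^ s : MvPowerSeries σ R) =
      monomial (Finsupp.single k s + Finsupp.single j 1) 1 := by
  rw [X_pow_eq, X, monomial_mul_monomial, one_mul, add_comm]

theorem single_zero_add_single_one_le_iff {e : Fin 2 →₀ ℕ} {a b : ℕ} :
    Finsupp.single 0 a + Finsupp.single 1 b ≤ e ↔ a ≤ e 0 ∧ b ≤ e 1 := by
  simp [Finsupp.le_def, Fin.forall_fin_two]

end PowerSeries

end Noncrossing

open Noncrossing Finset

theorem partGF0S_functional_equation_general (S : Set ℕ) [DecidablePred (· ∈ S)]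
    (hS : ∀ s ∈ S, 0 < s) :
    ∀ e : Fin 2 →₀ ℕ,
      MvPowerSeries.coeff e (partGF0S S) =
        MvPowerSeries.coeff e (1 : MvPowerSeries (Fin 2) ℚ) +
          ∑ s ∈ (Finset.range (e 0 + 1)).filter (· ∈ S),
            MvPowerSeries.coeff e
              (MvPowerSeries.X 1 * MvPowerSeries.X 0 ^ s * partGF0S S ^ s) := by
  intro e
  simp only [X_mul_X_pow_eq_monomial, coeff_monomial_one_mul_pow, coeff_partGF0S]
  rcases Nat.eq_zero_or_pos (e 0) with he₀ | he₀
  · have : (range (e 0 + 1)).filter (· ∈ S) = ∅ :=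
      filter_eq_empty_iff.2 fun s hs hsS => by
        have := hS s hsS
        simp only [he₀, zero_add, mem_range] at hs
        omega
    rw [this, sum_empty, add_zero, coeff_one, he₀, card_ncPartition_zero_points]
    simp [Finsupp.ext_iff, Fin.forall_fin_two, he₀]
  rw [coeff_one, if_neg (fun h => by simp [h] at he₀), zero_add]
  rcases Nat.eq_zero_or_pos (e 1) with he | he
  · rw [he, card_ncPartition_zero_blocks S he₀, Nat.cast_zero]
    refine (sum_eq_zero fun s _ => if_neg fun hle => ?_).symm
    exact absurd (single_zero_add_single_one_le_iff.1 hle).2 (by omega)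
  · rw [card_ncPartition_eq_sum hS he₀ he]
    push_cast
    refine sum_congr rfl fun s hs => (if_pos (single_zero_add_single_one_le_iff.2 ⟨?_, he⟩)).symm
    exact Nat.lt_succ_iff.1 (mem_range.1 (mem_filter.1 hs).1)

/-- For any nonempty set `S` of positive integers, the generating function
`P₀^S(x,y)` of crossing-free partitions with block sizes in `S` satisfies
`P₀^S(x,y) = 1 + y Σ_{s∈S} x^s (P₀^S(x,y))^s`; the identity is stated
coefficientwise, truncating the (formally convergent) sum over `s ∈ S` at the
relevant degree, since the terms with `s` greater than the `x`-degree of the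
coefficient do not contribute. -/
theorem partGF0S_functional_equation (S : Set ℕ) [DecidablePred (· ∈ S)]
    (hS : ∀ s ∈ S, 0 < s) (hne : S.Nonempty) :
    ∀ e : Fin 2 →₀ ℕ,
      MvPowerSeries.coeff e (partGF0S S) =
        MvPowerSeries.coeff e (1 : MvPowerSeries (Fin 2) ℚ) +
          ∑ s ∈ (Finset.range (e 0 + 1)).filter (· ∈ S),
            MvPowerSeries.coeff e
              (MvPowerSeries.X 1 * MvPowerSeries.X 0 ^ s * partGF0S S ^ s) :=
  partGF0S_functional_equation_general S hS
end

section
/- Let S be a nonempty subset of the positive integers with S ≠ {1}. Then there exists a unique positive real number τ_S such that Σ_{s∈S} (s−1)·τ_S^s = 1, and moreover 0 < τ_S ≤ 1. -/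
open Set Filter

/-- Let `S` be a nonempty set of positive integers with `S ≠ {1}`. Then there
exists a unique positive real number `τ_S` such that
`Σ_{s∈S} (s−1)·τ_S^s = 1`, and moreover `0 < τ_S ≤ 1`. -/
theorem exists_unique_tau (S : Set ℕ) (hpos : ∀ s ∈ S, 0 < s)
    (hne : S.Nonempty) (hS1 : S ≠ {1}) :
    ∃ τ : ℝ, (0 < τ ∧ τ ≤ 1 ∧ ∑' s : S, (((s : ℕ) : ℝ) - 1) * τ ^ (s : ℕ) = 1) ∧
      ∀ τ' : ℝ, 0 < τ' → (∑' s : S, (((s : ℕ) : ℝ) - 1) * τ' ^ (s : ℕ) = 1) → τ' = τ := by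
  classical
  -- there is an element of S that is at least 2
  obtain ⟨s₀, hs₀S, hs₀⟩ : ∃ s ∈ S, 2 ≤ s := by
    by_contra h
    push_neg at h
    apply hS1
    ext x
    simp only [Set.mem_singleton_iff]
    constructor
    · intro hx; have h1 := hpos x hx; have h2 := h x hx; omega
    · intro hx
      obtain ⟨y, hy⟩ := hne
      have h1 := hpos y hy; have h2 := h y hy
      have : y = 1 := by omega
      subst hx; rwa [← this]
  set g : ℝ → ℝ := fun τ => ∑' s : S, (((s : ℕ) : ℝ) - 1) * τ ^ (s : ℕ) with hgdef
  have hone : ∀ s : S, (1 : ℝ) ≤ ((s : ℕ) : ℝ) := by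
    intro s; exact_mod_cast hpos s s.2
  have hterm_nonneg : ∀ (τ : ℝ), 0 ≤ τ → ∀ s : S,
      0 ≤ (((s : ℕ) : ℝ) - 1) * τ ^ (s : ℕ) := by
    intro τ hτ s
    have h1 := hone s
    have h2 : (0 : ℝ) ≤ τ ^ (s : ℕ) := pow_nonneg hτ _
    nlinarith
  -- summability for |τ| < 1
  have hsummable : ∀ τ : ℝ, |τ| < 1 →
      Summable (fun s : S => (((s : ℕ) : ℝ) - 1) * τ ^ (s : ℕ)) := by
    intro τ hτ
    have h1 : Summable (fun n : ℕ => (n : ℝ) * τ ^ n) := by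
      simpa using summable_pow_mul_geometric_of_norm_lt_one 1
        (by rwa [Real.norm_eq_abs] : ‖τ‖ < 1)
    have h0 : Summable (fun n : ℕ => τ ^ n) :=
      summable_geometric_of_norm_lt_one (by rwa [Real.norm_eq_abs])
    have h2 : Summable (fun n : ℕ => ((n : ℝ) - 1) * τ ^ n) := by
      have := h1.sub h0
      refine this.congr fun n => ?_
      ring
    exact h2.subtype S
  -- value at 0
  have hg0 : g 0 = 0 := by
    rw [hgdef]
    have : ∀ s : S, (((s : ℕ) : ℝ) - 1) * (0 : ℝ) ^ (s : ℕ) = 0 := by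
      intro s
      have : (s : ℕ) ≠ 0 := (hpos s s.2).ne'
      rw [zero_pow this, mul_zero]
    simp only [this, tsum_zero]
  -- strict monotonicity (where summable)
  have hmono : ∀ a b : ℝ, 0 ≤ a → a < b →
      Summable (fun s : S => (((s : ℕ) : ℝ) - 1) * a ^ (s : ℕ)) →
      Summable (fun s : S => (((s : ℕ) : ℝ) - 1) * b ^ (s : ℕ)) →
      g a < g b := by
    intro a b ha hab hsa hsb
    refine Summable.tsum_lt_tsum (i := ⟨s₀, hs₀S⟩) ?_ ?_ hsa hsb
    · intro s
      have h1 := hone s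
      have h2 : a ^ (s : ℕ) ≤ b ^ (s : ℕ) := pow_le_pow_left₀ ha hab.le _
      exact mul_le_mul_of_nonneg_left h2 (by linarith)
    · have h2 : a ^ s₀ < b ^ s₀ := pow_lt_pow_left₀ hab ha (by omega)
      have h3 : (2 : ℝ) ≤ (s₀ : ℝ) := by exact_mod_cast hs₀
      show ((s₀ : ℝ) - 1) * a ^ s₀ < ((s₀ : ℝ) - 1) * b ^ s₀
      nlinarith
  -- continuity on [0, r] given summability at r
  have hcont : ∀ r : ℝ, 0 ≤ r →
      Summable (fun s : S => (((s : ℕ) : ℝ) - 1) * r ^ (s : ℕ)) →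
      ContinuousOn g (Icc 0 r) := by
    intro r hr hsr
    rw [hgdef]
    refine continuousOn_tsum (fun s => ?_) hsr fun s x hx => ?_
    · exact (continuous_const.mul (continuous_pow _)).continuousOn
    · rw [Real.norm_eq_abs, abs_of_nonneg (hterm_nonneg x hx.1 s)]
      have h1 : x ^ (s : ℕ) ≤ r ^ (s : ℕ) := pow_le_pow_left₀ hx.1 hx.2 _
      have h2 := hone s
      nlinarith
  -- find r ∈ (0,1] with summability at r and g r ≥ 1
  obtain ⟨r, hr0, hr1, hsr, hgr⟩ : ∃ r : ℝ, 0 < r ∧ r ≤ 1 ∧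
      Summable (fun s : S => (((s : ℕ) : ℝ) - 1) * r ^ (s : ℕ)) ∧ 1 ≤ g r := by
    by_cases hS : Summable (fun s : S => (((s : ℕ) : ℝ) - 1))
    · have hS' : Summable (fun s : S => (((s : ℕ) : ℝ) - 1) * (1 : ℝ) ^ (s : ℕ)) := by
        simpa using hS
      refine ⟨1, one_pos, le_refl 1, hS', ?_⟩
      have hle : ((s₀ : ℝ) - 1) * (1 : ℝ) ^ s₀ ≤ g 1 :=
        Summable.le_tsum hS' ⟨s₀, hs₀S⟩ fun j _ => hterm_nonneg 1 zero_le_one j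
      have h3 : (2 : ℝ) ≤ (s₀ : ℝ) := by exact_mod_cast hs₀
      simp only [one_pow, mul_one] at hle
      linarith
    · -- S "sums to infinity": find a finite piece with sum > 2
      have hind : ¬ Summable (S.indicator (fun n : ℕ => (n : ℝ) - 1)) := by
        intro h
        exact hS (summable_subtype_iff_indicator.mpr h)
      have hind_nonneg : ∀ n : ℕ, 0 ≤ S.indicator (fun n : ℕ => (n : ℝ) - 1) n := by
        intro n
        by_cases hn : n ∈ S
        · rw [Set.indicator_of_mem hn]
          have : (1 : ℝ) ≤ (n : ℝ) := by exact_mod_cast hpos n hn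
          linarith
        · rw [Set.indicator_of_notMem hn]
      have htend := (not_summable_iff_tendsto_nat_atTop_of_nonneg hind_nonneg).mp hind
      obtain ⟨N, hN⟩ := (htend.eventually_ge_atTop 3).exists
      set T : Finset ℕ := (Finset.range N).filter (· ∈ S) with hT
      have hTsum : (3 : ℝ) ≤ ∑ i ∈ T, ((i : ℝ) - 1) := by
        have heq : ∑ i ∈ T, ((i : ℝ) - 1)
            = ∑ i ∈ Finset.range N, S.indicator (fun n : ℕ => (n : ℝ) - 1) i := by
          rw [hT, Finset.sum_filter]
          refine Finset.sum_congr rfl fun i _ => ?_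
          rw [Set.indicator_apply]
        rw [heq]; exact hN
      -- the finite polynomial is continuous; near 1 it exceeds 2
      have hpoly : Continuous fun τ : ℝ => ∑ i ∈ T, ((i : ℝ) - 1) * τ ^ i := by
        exact continuous_finset_sum _ fun i _ => continuous_const.mul (continuous_pow _)
      have hat1 : (2 : ℝ) < ∑ i ∈ T, ((i : ℝ) - 1) * (1 : ℝ) ^ i := by
        simp only [one_pow, mul_one]; linarith
      have hev : ∀ᶠ τ in nhds (1 : ℝ), (2 : ℝ) < ∑ i ∈ T, ((i : ℝ) - 1) * τ ^ i :=
        ContinuousAt.eventually_lt continuousAt_const (hpoly.continuousAt (x := 1)) hat1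
      obtain ⟨r, hr2, hrIoo⟩ : ∃ r : ℝ,
          (2 : ℝ) < ∑ i ∈ T, ((i : ℝ) - 1) * r ^ i ∧ r ∈ Ioo (0 : ℝ) 1 := by
        haveI : (nhdsWithin (1 : ℝ) (Ioo (0 : ℝ) 1)).NeBot :=
          right_nhdsWithin_Ioo_neBot one_pos
        exact ((hev.filter_mono nhdsWithin_le_nhds).and eventually_mem_nhdsWithin).exists
      refine ⟨r, hrIoo.1, hrIoo.2.le, hsummable r (by rw [abs_of_pos hrIoo.1]; exact hrIoo.2), ?_⟩
      -- g r ≥ finite sum over T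
      have hsub : (T : Set ℕ) ⊆ S := by
        intro x hx
        simp only [hT, Finset.coe_filter, Set.mem_setOf_eq] at hx
        exact hx.2
      have hsummr := hsummable r (by rw [abs_of_pos hrIoo.1]; exact hrIoo.2)
      have hindr : Summable (S.indicator fun n : ℕ => ((n : ℝ) - 1) * r ^ n) :=
        summable_subtype_iff_indicator.mp hsummr
      have key : g r = ∑' n : ℕ, S.indicator (fun n : ℕ => ((n : ℝ) - 1) * r ^ n) n := by
        have h := tsum_subtype S (fun n : ℕ => ((n : ℝ) - 1) * r ^ n)
        rw [hgdef]
        exact h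
      have hfin : ∑ i ∈ T, S.indicator (fun n : ℕ => ((n : ℝ) - 1) * r ^ n) i ≤
          ∑' n : ℕ, S.indicator (fun n : ℕ => ((n : ℝ) - 1) * r ^ n) n := by
        refine Summable.sum_le_tsum T (fun i _ => ?_) hindr
        by_cases hi : i ∈ S
        · rw [Set.indicator_of_mem hi]
          have h1 : (1 : ℝ) ≤ (i : ℝ) := by exact_mod_cast hpos i hi
          have h2 : (0 : ℝ) ≤ r ^ i := pow_nonneg hrIoo.1.le _
          nlinarith
        · rw [Set.indicator_of_notMem hi]
      have heq : ∑ i ∈ T, S.indicator (fun n : ℕ => ((n : ℝ) - 1) * r ^ n) i =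
          ∑ i ∈ T, ((i : ℝ) - 1) * r ^ i := by
        refine Finset.sum_congr rfl fun i hi => ?_
        exact Set.indicator_of_mem (hsub hi) _
      rw [key]
      calc (1 : ℝ) ≤ ∑ i ∈ T, ((i : ℝ) - 1) * r ^ i := by linarith
        _ = ∑ i ∈ T, S.indicator (fun n : ℕ => ((n : ℝ) - 1) * r ^ n) i := heq.symm
        _ ≤ _ := hfin
  -- intermediate value theorem on [0, r]
  have hIVT := intermediate_value_Icc hr0.le (hcont r hr0.le hsr)
  have h1mem : (1 : ℝ) ∈ Icc (g 0) (g r) := by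
    rw [hg0]; exact ⟨zero_le_one, hgr⟩
  obtain ⟨τ, hτmem, hgτ⟩ := hIVT h1mem
  have hτpos : 0 < τ := by
    rcases lt_or_eq_of_le hτmem.1 with h | h
    · exact h
    · exfalso; rw [← h] at hgτ; rw [hg0] at hgτ; norm_num at hgτ
  -- summability extraction from tsum = 1
  have hsumm_of_eq_one : ∀ t : ℝ,
      (∑' s : S, (((s : ℕ) : ℝ) - 1) * t ^ (s : ℕ)) = 1 →
      Summable (fun s : S => (((s : ℕ) : ℝ) - 1) * t ^ (s : ℕ)) := by
    intro t ht
    by_contra h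
    rw [tsum_eq_zero_of_not_summable h] at ht
    norm_num at ht
  refine ⟨τ, ⟨hτpos, le_trans hτmem.2 hr1, hgτ⟩, ?_⟩
  intro τ' hτ' hgτ'
  have hsτ : Summable (fun s : S => (((s : ℕ) : ℝ) - 1) * τ ^ (s : ℕ)) :=
    hsumm_of_eq_one τ hgτ
  have hsτ' : Summable (fun s : S => (((s : ℕ) : ℝ) - 1) * τ' ^ (s : ℕ)) :=
    hsumm_of_eq_one τ' hgτ'
  have e' : g τ' = 1 := hgτ'
  rcases lt_trichotomy τ' τ with h | h | h
  · have := hmono τ' τ hτ'.le h hsτ' hsτ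
    linarith
  · exact h
  · have := hmono τ τ' hτpos.le h hsτ hsτ'
    linarith
end

section
/- For q ≥ 1 and S = qℕ* (positive multiples of q), the constants are τ_{qℕ*} = (1/(q+1))^{1/q}, ρ_{qℕ*} = (q/(q+1))·(1/(q+1))^{1/q}, α_{qℕ*} = (q+1)/q, and β_{qℕ*} = √(2(q+1)/q²). In particular, Σ_{n≥1}(qn−1)x^{qn} = 1 + ((q+1)x^q − 1)/(1−x^q)² for |x| < 1, and τ_{qℕ*} is the unique positive solution of Σ_{n≥1}(qn−1)τ^{qn} = 1. -/
/-!
With `y = x ^ q`, each series in the statement is `∑ p (n + 1) * y ^ (n + 1)` for a polynomial `p`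
of degree at most two, hence a combination of `y / (1 - y)`, `y / (1 - y) ^ 2` and
`y (1 + y) / (1 - y) ^ 3`. For `0 ≤ y < 1` the equation `∑ (q (n + 1) - 1) y ^ (n + 1) = 1` becomes
`((q + 1) y - 1) / (1 - y) ^ 2 = 0`, while for `y ≥ 1` the series diverges; so `τ ^ q = 1 / (q + 1)`
is forced, and the remaining constants are the closed forms evaluated at `y = 1 / (q + 1)`.
-/

section Geometric

variable {𝕜 : Type*} [NormedField 𝕜] {y : 𝕜}

theorem hasSum_pow_succ (hy : ‖y‖ < 1) : HasSum (fun n : ℕ ↦ y ^ (n + 1)) (y / (1 - y)) := by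
  simpa [pow_succ', div_eq_mul_inv] using (hasSum_geometric_of_norm_lt_one hy).mul_left y

theorem hasSum_succ_mul_pow_succ (hy : ‖y‖ < 1) :
    HasSum (fun n : ℕ ↦ ((n : 𝕜) + 1) * y ^ (n + 1)) (y / (1 - y) ^ 2) := by
  have h := (hasSum_nat_add_iff' (f := fun n : ℕ ↦ (n : 𝕜) * y ^ n) 1).2
    (hasSum_coe_mul_geometric_of_norm_lt_one hy)
  simpa using h

theorem hasSum_succ_sq_mul_pow_succ (hy : ‖y‖ < 1) :
    HasSum (fun n : ℕ ↦ ((n : 𝕜) + 1) ^ 2 * y ^ (n + 1)) (y * (1 + y) / (1 - y) ^ 3) := by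
  have hchoose (n : ℕ) : ((n + 2).choose 2 : 𝕜) * 2 = ((n : 𝕜) + 2) * ((n : 𝕜) + 1) := by
    have h : (n + 2).choose 2 * 2 = (n + 2) * (n + 1) := by
      simpa using (Nat.add_one_mul_choose_eq (n + 1) 1).symm
    simpa using congrArg (Nat.cast : ℕ → 𝕜) h
  -- `(n + 1) ^ 2 = 2 * (n + 2).choose 2 - (n + 1)`
  have h : HasSum (fun n : ℕ ↦ 2 * y * ((n + 2).choose 2 * y ^ n) - (n + 1) * y ^ (n + 1))
      (2 * y * (1 / (1 - y) ^ (2 + 1)) - y / (1 - y) ^ 2) :=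
    ((hasSum_choose_mul_geometric_of_norm_lt_one 2 hy).mul_left (2 * y)).sub
      (hasSum_succ_mul_pow_succ hy)
  have h1y := (isUnit_one_sub_of_norm_lt_one hy).ne_zero
  convert h using 1
  · funext n
    linear_combination (-(y ^ (n + 1)) * hchoose n)
  · field_simp
    ring

theorem hasSum_mul_succ_mul_pow_succ (c : 𝕜) (hy : ‖y‖ < 1) :
    HasSum (fun n : ℕ ↦ c * (n + 1) * y ^ (n + 1)) (c * y / (1 - y) ^ 2) := by
  simpa only [mul_assoc, mul_div_assoc] using (hasSum_succ_mul_pow_succ hy).mul_left c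

theorem hasSum_mul_succ_sub_one_mul_pow_succ (c : 𝕜) (hy : ‖y‖ < 1) :
    HasSum (fun n : ℕ ↦ (c * (n + 1) - 1) * y ^ (n + 1))
      (1 + ((c + 1) * y - 1) / (1 - y) ^ 2) := by
  have h : HasSum (fun n : ℕ ↦ c * (n + 1) * y ^ (n + 1) - y ^ (n + 1))
      (c * y / (1 - y) ^ 2 - y / (1 - y)) :=
    (hasSum_mul_succ_mul_pow_succ c hy).sub (hasSum_pow_succ hy)
  have h1y := (isUnit_one_sub_of_norm_lt_one hy).ne_zero
  convert h using 1
  · funext n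
    ring
  · field_simp
    ring

theorem hasSum_mul_succ_mul_mul_succ_sub_one_mul_pow_succ (c : 𝕜) (hy : ‖y‖ < 1) :
    HasSum (fun n : ℕ ↦ c * (n + 1) * (c * (n + 1) - 1) * y ^ (n + 1))
      (c * y * (c - 1 + (c + 1) * y) / (1 - y) ^ 3) := by
  have h : HasSum (fun n : ℕ ↦ c ^ 2 * ((n + 1) ^ 2 * y ^ (n + 1)) - c * (n + 1) * y ^ (n + 1))
      (c ^ 2 * (y * (1 + y) / (1 - y) ^ 3) - c * y / (1 - y) ^ 2) :=
    ((hasSum_succ_sq_mul_pow_succ hy).mul_left _).sub (hasSum_mul_succ_mul_pow_succ c hy)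
  have h1y := (isUnit_one_sub_of_norm_lt_one hy).ne_zero
  convert h using 1
  · funext n
    ring
  · field_simp
    ring

end Geometric

open Filter

section Real

variable {c y : ℝ}

theorem not_summable_mul_succ_sub_one_mul_pow_succ (hc : 0 < c) (hy : 1 ≤ y) :
    ¬ Summable (fun n : ℕ ↦ (c * (n + 1) - 1) * y ^ (n + 1)) := by
  intro h
  have hcoeff : Tendsto (fun n : ℕ ↦ c * (n + 1) - 1) atTop atTop :=
    tendsto_atTop_add_const_right _ _
      ((tendsto_atTop_add_const_right _ 1 tendsto_natCast_atTop_atTop).const_mul_atTop hc)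
  have hterm : Tendsto (fun n : ℕ ↦ (c * (n + 1) - 1) * y ^ (n + 1)) atTop atTop :=
    tendsto_atTop_mono' _ ((hcoeff.eventually_ge_atTop 0).mono fun n hn ↦
      le_mul_of_one_le_right hn (one_le_pow₀ hy)) hcoeff
  exact not_tendsto_atTop_of_tendsto_nhds h.tendsto_atTop_zero hterm

theorem tsum_mul_succ_sub_one_mul_pow_succ_eq_one_iff (hc : 0 < c) (hy : 0 ≤ y) :
    ∑' n : ℕ, (c * (n + 1) - 1) * y ^ (n + 1) = 1 ↔ y = 1 / (c + 1) := by
  rcases lt_or_ge y 1 with hy1 | hy1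
  · have hnorm : ‖y‖ < 1 := by rwa [Real.norm_of_nonneg hy]
    have h1y : (1 - y) ^ 2 ≠ 0 := pow_ne_zero _ (by linarith)
    rw [(hasSum_mul_succ_sub_one_mul_pow_succ c hnorm).tsum_eq, add_eq_left, div_eq_zero_iff,
      or_iff_left h1y, sub_eq_zero, eq_div_iff (by linarith), mul_comm]
  · rw [tsum_eq_zero_of_not_summable (not_summable_mul_succ_sub_one_mul_pow_succ hc hy1)]
    simp only [zero_ne_one, false_iff]
    rintro rfl
    exact absurd hy1 (not_le.2 ((div_lt_one (by linarith)).2 (by linarith)))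

end Real

/-- For `q ≥ 1` and `S = qℕ* = {q, 2q, 3q, …}`, the constants are
`τ = (1/(q+1))^(1/q)`, `ρ = (q/(q+1))·(1/(q+1))^(1/q)`, `α = (q+1)/q` and
`β = √(2(q+1)/q²)`. In particular `Σ_{n≥1} (qn−1) x^(qn) =
1 + ((q+1)x^q − 1)/(1−x^q)²` for `|x| < 1`, and `τ` is the unique positive
solution of `Σ_{n≥1} (qn−1) τ^(qn) = 1`. Here
`ρ = τ / (Σ_{s∈S} s τ^s)`, `α = 1 + Σ_{s∈S} τ^s` and
`β = √(2 (Σ_{s∈S} s τ^s)³ / (Σ_{s∈S} s(s−1) τ^s))`, the sums over `S = qℕ*`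
being indexed by `s = q(n+1)`, `n ∈ ℕ`. -/
theorem qMultiple_constants (q : ℕ) (hq : 1 ≤ q) :
    let τ : ℝ := (1 / ((q : ℝ) + 1)) ^ ((1 : ℝ) / q)
    (∀ x : ℝ, |x| < 1 →
      ∑' n : ℕ, ((q : ℝ) * (n + 1) - 1) * x ^ (q * (n + 1)) =
        1 + (((q : ℝ) + 1) * x ^ q - 1) / (1 - x ^ q) ^ 2) ∧
    ((∑' n : ℕ, ((q : ℝ) * (n + 1) - 1) * τ ^ (q * (n + 1))) = 1 ∧
      ∀ τ' : ℝ, 0 < τ' →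
        (∑' n : ℕ, ((q : ℝ) * (n + 1) - 1) * τ' ^ (q * (n + 1))) = 1 → τ' = τ) ∧
    τ / (∑' n : ℕ, ((q : ℝ) * (n + 1)) * τ ^ (q * (n + 1))) =
      ((q : ℝ) / ((q : ℝ) + 1)) * (1 / ((q : ℝ) + 1)) ^ ((1 : ℝ) / q) ∧
    1 + (∑' n : ℕ, τ ^ (q * (n + 1))) = ((q : ℝ) + 1) / q ∧
    Real.sqrt (2 * (∑' n : ℕ, ((q : ℝ) * (n + 1)) * τ ^ (q * (n + 1))) ^ 3 /
        (∑' n : ℕ, ((q : ℝ) * (n + 1)) * ((q : ℝ) * (n + 1) - 1) * τ ^ (q * (n + 1)))) =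
      Real.sqrt (2 * ((q : ℝ) + 1) / (q : ℝ) ^ 2) := by
  intro τ
  have hq0 : q ≠ 0 := by omega
  have hc : (0 : ℝ) < q := by positivity
  have hτ : 0 ≤ τ := Real.rpow_nonneg (by positivity) _
  have hτq : τ ^ q = 1 / ((q : ℝ) + 1) := by
    rw [← Real.rpow_inv_natCast_pow (by positivity : (0 : ℝ) ≤ 1 / ((q : ℝ) + 1)) hq0, ← one_div]
  have hy : ‖1 / ((q : ℝ) + 1)‖ < 1 := by
    rw [Real.norm_of_nonneg (by positivity), div_lt_one (by positivity)]
    linarith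
  have h1y : 1 - 1 / ((q : ℝ) + 1) = q / (q + 1) := by field_simp; ring
  simp only [pow_mul, hτq]
  refine ⟨fun x hx ↦ (hasSum_mul_succ_sub_one_mul_pow_succ _ ?_).tsum_eq,
    ⟨(tsum_mul_succ_sub_one_mul_pow_succ_eq_one_iff hc (by positivity)).2 rfl, fun τ' hτ' h ↦ ?_⟩,
    ?_, ?_, ?_⟩
  · rw [norm_pow, Real.norm_eq_abs]
    exact pow_lt_one₀ (abs_nonneg x) hx hq0
  · rw [← Real.pow_rpow_inv_natCast hτ'.le hq0,
      (tsum_mul_succ_sub_one_mul_pow_succ_eq_one_iff hc (by positivity)).1 h, ← hτq,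
      Real.pow_rpow_inv_natCast hτ hq0]
  · rw [(hasSum_mul_succ_mul_pow_succ _ hy).tsum_eq, h1y]
    field_simp
    rfl
  · rw [(hasSum_pow_succ hy).tsum_eq, h1y]
    field_simp
  · rw [(hasSum_mul_succ_mul_pow_succ _ hy).tsum_eq,
      (hasSum_mul_succ_mul_mul_succ_sub_one_mul_pow_succ _ hy).tsum_eq, h1y,
      mul_one_div_cancel (by positivity), sub_add_cancel]
    congr 1
    field_simp
end
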